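/- Let v : Ω → ℝ satisfy: (a) ‖v‖_∞ ≤ C₀; (b) for all x₀ ∈ ∂Ω, r > 0: osc_{B_r(x₀) ∩ Ω} v ≤ C₁ r^τ; (c) whenever x, y ∈ Ω with |x-y| < δ(x)/8 (δ(x) = dist(x,∂Ω)) one has |v(x)-v(y)| ≤ C₂ |x-y| / (δ(x) δ(y)). Then v is κ-Hölder continuous on Ω with κ = min(1 - 2/p, τ/p) for any p > 2, with Hölder constant depending only on C₀, C₁, C₂, τ, p, diam Ω. -/

import Mathlib

/-! Split according to the scale `r = ‖x - y‖`. For `r ≥ 8⁻ᵖ` the sup bound suffices. For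
smaller `r` put `s = r^(1/p)`, so that `r ≤ s² < s / 8`. If `x` lies within `s` of `∂Ω`, both
points lie in a ball of radius `2s` about a nearest boundary point, and the boundary decay gives
`(2s)^τ ≲ r^(τ/p)`. Otherwise `δ(x), δ(y) ≳ s`, the interior estimate applies and gives
`r / s² = r^(1 - 2/p)`. -/

open Metric Set

theorem le_max_div_rpow_mul_rpow {a M K r t κ : ℝ} (hM : 0 ≤ M) (ht : 0 < t) (hκ : 0 ≤ κ)
    (hr : 0 ≤ r) (hlarge : a ≤ M) (hsmall : r < t → a ≤ K * r ^ κ) :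
    a ≤ max (M / t ^ κ) K * r ^ κ := by
  rcases lt_or_ge r t with hrt | htr
  · exact (hsmall hrt).trans (by gcongr; exact le_max_right _ _)
  · calc a ≤ M / t ^ κ * t ^ κ := by rwa [div_mul_cancel₀ _ (by positivity)]
      _ ≤ max (M / t ^ κ) K * r ^ κ := by gcongr; exact le_max_left _ _

section HolderOfBoundaryDecay

variable {E : Type*} [NormedAddCommGroup E]

def OscillationDecaysAtFrontier (Ω : Set E) (v : E → ℝ) (C τ : ℝ) : Prop :=
  ∀ x₀ ∈ frontier Ω, ∀ r > (0 : ℝ), ∀ x ∈ ball x₀ r ∩ Ω, ∀ y ∈ ball x₀ r ∩ Ω,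
    |v x - v y| ≤ C * r ^ τ

def InteriorGradientBound (Ω : Set E) (v : E → ℝ) (C : ℝ) : Prop :=
  ∀ x ∈ Ω, ∀ y ∈ Ω, ‖x - y‖ < infDist x Ωᶜ / 8 →
    |v x - v y| ≤ C * ‖x - y‖ / (infDist x Ωᶜ * infDist y Ωᶜ)

variable {Ω : Set E} {v : E → ℝ} {x y : E}

theorem abs_sub_le_of_infDist_le [NormedSpace ℝ E] [FiniteDimensional ℝ E] {C τ s : ℝ}
    (hΩ : Ω ≠ univ) (hosc : OscillationDecaysAtFrontier Ω v C τ) (hx : x ∈ Ω) (hy : y ∈ Ω)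
    (hδ : infDist x Ωᶜ ≤ s) (hxy : dist x y < s) :
    |v x - v y| ≤ C * (2 * s) ^ τ := by
  obtain ⟨x₀, hx₀, hδx₀⟩ := exists_mem_frontier_infDist_compl_eq_dist hx hΩ
  have hs : 0 < s := dist_nonneg.trans_lt hxy
  have hx₀x : dist x x₀ < 2 * s := by linarith
  have hx₀y : dist y x₀ < 2 * s := by linarith [dist_triangle y x x₀, dist_comm x y]
  exact hosc x₀ hx₀ (2 * s) (by positivity) x ⟨hx₀x, hx⟩ y ⟨hx₀y, hy⟩

theorem abs_sub_le_of_lt_infDist {C s : ℝ} (hgrad : InteriorGradientBound Ω v C)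
    (hx : x ∈ Ω) (hy : y ∈ Ω) (hs : s < infDist x Ωᶜ) (hxy : ‖x - y‖ < s / 8) :
    |v x - v y| ≤ 8 / 7 * max C 0 * ‖x - y‖ / s ^ 2 := by
  have hs0 : 0 < s := by linarith [norm_nonneg (x - y)]
  have hδy : 7 / 8 * s < infDist y Ωᶜ := by
    linarith [infDist_le_infDist_add_dist (x := x) (y := y) (s := Ωᶜ), dist_eq_norm x y]
  have hδ : 7 / 8 * s ^ 2 ≤ infDist x Ωᶜ * infDist y Ωᶜ := by nlinarith
  calc |v x - v y| ≤ C * ‖x - y‖ / (infDist x Ωᶜ * infDist y Ωᶜ) :=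
        hgrad x hx y hy (by linarith)
    _ ≤ max C 0 * ‖x - y‖ / (infDist x Ωᶜ * infDist y Ωᶜ) := by
        gcongr
        · exact hδ.trans' (by positivity)
        · exact le_max_left C 0
    _ ≤ max C 0 * ‖x - y‖ / (7 / 8 * s ^ 2) := by gcongr
    _ = 8 / 7 * max C 0 * ‖x - y‖ / s ^ 2 := by ring

theorem abs_sub_le_mul_rpow_of_norm_lt [NormedSpace ℝ E] [FiniteDimensional ℝ E]
    {C₁ C₂ τ p : ℝ} (hp : 2 < p) (hΩ : Bornology.IsBounded Ω)
    (hosc : OscillationDecaysAtFrontier Ω v C₁ τ)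
    (hgrad : InteriorGradientBound Ω v C₂) (hx : x ∈ Ω) (hy : y ∈ Ω)
    (hxy : ‖x - y‖ < (1 / 8) ^ p) :
    |v x - v y| ≤
      max (max C₁ 0 * 2 ^ τ) (8 / 7 * max C₂ 0) * ‖x - y‖ ^ min (1 - 2 / p) (τ / p) := by
  set K := max (max C₁ 0 * 2 ^ τ) (8 / 7 * max C₂ 0)
  set κ := min (1 - 2 / p) (τ / p)
  have hK : 0 ≤ K := le_max_of_le_right (by positivity)
  rcases eq_or_ne x y with rfl | hne
  · rw [sub_self, abs_zero]
    positivity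
  have : Nontrivial E := ⟨⟨x, y, hne⟩⟩
  set r := ‖x - y‖
  have hr : 0 < r := norm_pos_iff.2 (sub_ne_zero.2 hne)
  have hΩ_ne : Ω ≠ univ := fun h ↦ NormedSpace.unbounded_univ ℝ E (h ▸ hΩ)
  have hp0 : 0 < p := by linarith
  have hr1 : r ≤ 1 := hxy.le.trans (Real.rpow_le_one (by norm_num) (by norm_num) hp0.le)
  have mul_rpow_le {a α : ℝ} (ha : a ≤ K) (hα : κ ≤ α) : a * r ^ α ≤ K * r ^ κ :=
    mul_le_mul ha (Real.rpow_le_rpow_of_exponent_ge hr hr1 hα) (by positivity) hK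
  set s := r ^ p⁻¹
  have hs8 : s < 1 / 8 := by
    simpa [Real.rpow_rpow_inv, hp0.ne'] using Real.rpow_lt_rpow hr.le hxy (inv_pos.2 hp0)
  have hs_sq : s ^ 2 = r ^ (2 / p) := by
    rw [← Real.rpow_natCast, ← Real.rpow_mul hr.le]; ring_nf
  have hr_le : r ≤ s ^ 2 := by
    rw [hs_sq]
    simpa using Real.rpow_le_rpow_of_exponent_ge hr hr1 ((div_le_one hp0).2 (by linarith))
  have hs0 : 0 < s := by positivity
  by_cases hδ : infDist x Ωᶜ ≤ s
  · calc |v x - v y| ≤ C₁ * (2 * s) ^ τ :=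
          abs_sub_le_of_infDist_le hΩ_ne hosc hx hy hδ (by rw [dist_eq_norm]; nlinarith)
      _ ≤ max C₁ 0 * 2 ^ τ * r ^ (τ / p) := by
          rw [Real.mul_rpow (by norm_num) hs0.le, ← Real.rpow_mul hr.le, inv_mul_eq_div,
            ← mul_assoc]
          gcongr
          exact le_max_left C₁ 0
      _ ≤ K * r ^ κ := mul_rpow_le (le_max_left _ _) (min_le_right _ _)
  · calc |v x - v y| ≤ 8 / 7 * max C₂ 0 * r / s ^ 2 :=
          abs_sub_le_of_lt_infDist hgrad hx hy (not_le.1 hδ) (by nlinarith)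
      _ = 8 / 7 * max C₂ 0 * r ^ (1 - 2 / p) := by
          rw [hs_sq, Real.rpow_sub hr, Real.rpow_one, mul_div_assoc]
      _ ≤ K * r ^ κ := mul_rpow_le (le_max_right _ _) (min_le_left _ _)

end HolderOfBoundaryDecay

theorem stmt18_general (C₀ C₁ C₂ τ p D : ℝ) (hτ0 : 0 < τ) (hp : 2 < p) :
    ∃ C : ℝ, ∀ (d : ℕ) (Ω : Set (EuclideanSpace ℝ (Fin d)))
      (v : EuclideanSpace ℝ (Fin d) → ℝ),
      IsOpen Ω → Bornology.IsBounded Ω → Metric.diam Ω ≤ D →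
      (∀ x ∈ Ω, |v x| ≤ C₀) →
      (∀ x₀ ∈ frontier Ω, ∀ r > (0 : ℝ),
        ∀ x ∈ Metric.ball x₀ r ∩ Ω, ∀ y ∈ Metric.ball x₀ r ∩ Ω,
          |v x - v y| ≤ C₁ * r ^ τ) →
      (∀ x ∈ Ω, ∀ y ∈ Ω, ‖x - y‖ < Metric.infDist x Ωᶜ / 8 →
        |v x - v y| ≤ C₂ * ‖x - y‖ / (Metric.infDist x Ωᶜ * Metric.infDist y Ωᶜ)) →
      ∀ x ∈ Ω, ∀ y ∈ Ω,
        |v x - v y| ≤ C * ‖x - y‖ ^ min (1 - 2 / p) (τ / p) := by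
  have hκ : 0 ≤ min (1 - 2 / p) (τ / p) :=
    le_min (by rw [sub_nonneg, div_le_one (by linarith)]; linarith) (by positivity)
  refine ⟨max (2 * max C₀ 0 / ((1 / 8) ^ p) ^ min (1 - 2 / p) (τ / p))
    (max (max C₁ 0 * 2 ^ τ) (8 / 7 * max C₂ 0)), ?_⟩
  intro d Ω v _ hΩ _ hsup hosc hgrad x hx y hy
  refine le_max_div_rpow_mul_rpow (by positivity) (by positivity) hκ (norm_nonneg _) ?_
    (abs_sub_le_mul_rpow_of_norm_lt hp hΩ hosc hgrad hx hy)
  calc |v x - v y| ≤ |v x| + |v y| := abs_sub _ _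
    _ ≤ 2 * max C₀ 0 := by linarith [hsup x hx, hsup y hy, le_max_left C₀ 0]

theorem stmt18 (C₀ C₁ C₂ τ p D : ℝ) (hτ0 : 0 < τ) (hτ1 : τ < 1) (hp : 2 < p) :
    ∃ C : ℝ, ∀ (d : ℕ) (Ω : Set (EuclideanSpace ℝ (Fin d)))
      (v : EuclideanSpace ℝ (Fin d) → ℝ),
      IsOpen Ω → Bornology.IsBounded Ω → Metric.diam Ω ≤ D →
      (∀ x ∈ Ω, |v x| ≤ C₀) →
      (∀ x₀ ∈ frontier Ω, ∀ r > (0 : ℝ),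
        ∀ x ∈ Metric.ball x₀ r ∩ Ω, ∀ y ∈ Metric.ball x₀ r ∩ Ω,
          |v x - v y| ≤ C₁ * r ^ τ) →
      (∀ x ∈ Ω, ∀ y ∈ Ω, ‖x - y‖ < Metric.infDist x Ωᶜ / 8 →
        |v x - v y| ≤ C₂ * ‖x - y‖ / (Metric.infDist x Ωᶜ * Metric.infDist y Ωᶜ)) →
      ∀ x ∈ Ω, ∀ y ∈ Ω,
        |v x - v y| ≤ C * ‖x - y‖ ^ min (1 - 2 / p) (τ / p) :=
  stmt18_general C₀ C₁ C₂ τ p D hτ0 hp
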